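/- Let χ : {1,…,n} → {ℓ,c,r} with χ⁻¹(c) ∩ {2,…,n−1} nonempty, and let l₁ be its least element. Then the map α₁' : IBNC(χ) → IBNC(χ₁) × IBNC(χ') defined by α₁'(π) = (π|_{[1,l₁]}, π|_{[l₁,n]}) is well defined and injective. -/
import Mathlib


namespace FFB

/-- The three letters ℓ, c, r labelling the faces. -/
inductive Letter : Type where
  | l | c | r
deriving DecidableEq

/-- `x` is one of the letters `ℓ`, `c`. -/
def isLC (x : Letter) : Prop := x = Letter.l ∨ x = Letter.c

variable {α : Type*}

/-- The total order `≺_χ` on the index set determined by `χ`: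
the elements of `χ⁻¹{ℓ,c}` in increasing order followed by the elements of
`χ⁻¹{r}` in decreasing order. -/
def chiLT [LT α] (χ : α → Letter) (i j : α) : Prop :=
  (isLC (χ i) ∧ isLC (χ j) ∧ i < j)
  ∨ (isLC (χ i) ∧ χ j = Letter.r)
  ∨ (χ i = Letter.r ∧ χ j = Letter.r ∧ j < i)

/-- A partition (equivalence relation) `π` is `χ`-noncrossing if there is no quadruple
`s₁ ≺_χ r₁ ≺_χ s₂ ≺_χ r₂` with `s₁ ∼ s₂`, `r₁ ∼ r₂` lying in different blocks. -/
def ChiNoncrossing [LT α] (χ : α → Letter) (π : Setoid α) : Prop :=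
  ∀ s₁ r₁ s₂ r₂ : α, chiLT χ s₁ r₁ → chiLT χ r₁ s₂ → chiLT χ s₂ r₂ →
    π s₁ s₂ → π r₁ r₂ → π s₁ r₁

/-- A partition `π` is `χ`-interval if whenever `i < j < k`, `i ∼ k` and `χ j = c`,
then `i, j, k` all lie in the same block. -/
def ChiInterval [LT α] (χ : α → Letter) (π : Setoid α) : Prop :=
  ∀ i j k : α, i < j → j < k → χ j = Letter.c → π i k → π i j

/-- The set of interval-bi-noncrossing partitions with respect to `χ`. -/
def IBNC [LT α] (χ : α → Letter) : Set (Setoid α) :=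
  {π | ChiNoncrossing χ π ∧ ChiInterval χ π}

/-- The set of `χ`-noncrossing partitions. -/
def NC [LT α] (χ : α → Letter) : Set (Setoid α) :=
  {π | ChiNoncrossing χ π}

/-- Restriction of a partition of `α` to a subset `V ⊆ α`. -/
def restrict (V : Set α) (σ : Setoid α) : Setoid V := Setoid.comap Subtype.val σ

/-- Restriction of `χ` to a subset `V ⊆ α`. -/
def restChi (V : Set α) (χ : α → Letter) : V → Letter := fun x => χ x.1

/- `mu` is the Möbius function of the finite poset `P` (with the induced order):
it is the (two-sided) convolution inverse of the zeta function. -/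
open Classical in
def IsMobius {β : Type*} [PartialOrder β] (P : Set β) (mu : β → β → ℂ) : Prop :=
  ∀ a ∈ P, ∀ b ∈ P, a ≤ b →
    ((∑ᶠ c ∈ {c | c ∈ P ∧ a ≤ c ∧ c ≤ b}, mu a c) = if a = b then 1 else 0) ∧
    ((∑ᶠ c ∈ {c | c ∈ P ∧ a ≤ c ∧ c ≤ b}, mu c b) = if a = b then 1 else 0)

section Moments

variable {A : Type*} [Ring A] [LinearOrder α] [Finite α]

/-- `φ_V(z₁,…,zₙ) = φ(z_{l₁} ⋯ z_{l_k})` where `V = {l₁ < ⋯ < l_k}`. -/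
noncomputable def phiV (φ : A → ℂ) (z : α → A) (V : Set α) : ℂ :=
  φ (((Set.toFinite V).toFinset.sort (· ≤ ·)).map z).prod

/-- `φ_σ(z₁,…,zₙ) = ∏_{V ∈ σ} φ_V(z₁,…,zₙ)`. -/
noncomputable def phiPart (φ : A → ℂ) (z : α → A) (σ : Setoid α) : ℂ :=
  ∏ᶠ q : Quotient σ, phiV φ z {y | Quotient.mk σ y = q}

/-- The free-free-Boolean cumulant
`κ_{χ,π}(z₁,…,zₙ) = Σ_{σ ∈ IBNC(χ), σ ≤ π} μ_{IBNC(χ)}(σ,π) φ_σ(z₁,…,zₙ)`,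
where `mu` is (a function which is) the Möbius function of `IBNC(χ)`. -/
noncomputable def cum (φ : A → ℂ) (χ : α → Letter)
    (mu : Setoid α → Setoid α → ℂ) (z : α → A) (π : Setoid α) : ℂ :=
  ∑ᶠ σ ∈ {σ | σ ∈ IBNC χ ∧ σ ≤ π}, mu σ π * phiPart φ z σ

end Moments

/-- Combinatorial free-free-Boolean independence: mixed cumulants vanish.
`F i x` is the face of the `i`-th triple labelled by the letter `x`. -/
def CombFFB {A : Type*} [Ring A] [Algebra ℂ A] (φ : A →ₗ[ℂ] ℂ) {I : Type*}
    (F : I → Letter → NonUnitalSubalgebra ℂ A) : Prop :=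
  ∀ (n : ℕ) (χ : Fin n → Letter) (ω : Fin n → I) (z : Fin n → A),
    (∀ k, z k ∈ F (ω k) (χ k)) → (¬ ∃ i, ∀ k, ω k = i) →
    ∀ mu : Setoid (Fin n) → Setoid (Fin n) → ℂ, IsMobius (IBNC χ) mu →
      cum (⇑φ) χ mu z ⊤ = 0

end FFB

namespace FFB

/-- Let `l₁` be the least element of `χ⁻¹(c) ∩ {2,…,n−1}` (in 1-indexed
notation; here `0 < l₁` and `l₁ + 2 ≤ n` in 0-indexed notation). Then the map
`α₁'(π) = (π|_{[1,l₁]}, π|_{[l₁,n]})` is well defined from `IBNC(χ)` to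
`IBNC(χ₁) × IBNC(χ')` and injective. -/
theorem restrict_pair_wellDefined_injective (n : ℕ) (χ : Fin n → Letter) (l₁ : Fin n)
    (h0 : 0 < (l₁ : ℕ)) (hn : (l₁ : ℕ) + 2 ≤ n) (hc : χ l₁ = Letter.c)
    (hmin : ∀ j : Fin n, χ j = Letter.c → 0 < (j : ℕ) → (j : ℕ) + 2 ≤ n → l₁ ≤ j) :
    (∀ π ∈ IBNC χ,
        restrict (Set.Iic l₁) π ∈ IBNC (restChi (Set.Iic l₁) χ) ∧
        restrict (Set.Ici l₁) π ∈ IBNC (restChi (Set.Ici l₁) χ)) ∧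
    (∀ π ∈ IBNC χ, ∀ σ ∈ IBNC χ,
        restrict (Set.Iic l₁) π = restrict (Set.Iic l₁) σ →
        restrict (Set.Ici l₁) π = restrict (Set.Ici l₁) σ →
        π = σ) := by
  constructor
  · rintro π ⟨hnc, hint⟩
    refine ⟨⟨?_, ?_⟩, ?_, ?_⟩
    · intro s₁ r₁ s₂ r₂ h1 h2 h3 hs hr
      exact hnc s₁.1 r₁.1 s₂.1 r₂.1 h1 h2 h3 hs hr
    · intro i j k hij hjk hcj hik
      exact hint i.1 j.1 k.1 hij hjk hcj hik
    · intro s₁ r₁ s₂ r₂ h1 h2 h3 hs hr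
      exact hnc s₁.1 r₁.1 s₂.1 r₂.1 h1 h2 h3 hs hr
    · intro i j k hij hjk hcj hik
      exact hint i.1 j.1 k.1 hij hjk hcj hik
  · rintro π ⟨-, hπi⟩ σ ⟨-, hσi⟩ h1 h2
    have key : ∀ (τ : Setoid (Fin n)), ChiInterval χ τ → ∀ a b : Fin n,
        a < l₁ → l₁ < b → (τ a b ↔ (τ a l₁ ∧ τ l₁ b)) := by
      intro τ hτ a b ha hb
      constructor
      · intro hab
        have h1 : τ a l₁ := hτ a l₁ b ha hb hc hab
        exact ⟨h1, τ.trans (τ.symm h1) hab⟩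
      · rintro ⟨x, y⟩; exact τ.trans x y
    have E1 : ∀ a b : Fin n, a ≤ l₁ → b ≤ l₁ → (π a b ↔ σ a b) := by
      intro a b ha hb
      exact Setoid.ext_iff.mp h1 ⟨a, ha⟩ ⟨b, hb⟩
    have E2 : ∀ a b : Fin n, l₁ ≤ a → l₁ ≤ b → (π a b ↔ σ a b) := by
      intro a b ha hb
      exact Setoid.ext_iff.mp h2 ⟨a, ha⟩ ⟨b, hb⟩
    apply Setoid.ext
    intro a b
    rcases le_or_gt a l₁ with ha | ha
    · rcases le_or_gt b l₁ with hb | hb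
      · exact E1 a b ha hb
      · rcases lt_or_eq_of_le ha with ha' | ha'
        · rw [key π hπi a b ha' hb, key σ hσi a b ha' hb,
            E1 a l₁ ha le_rfl, E2 l₁ b le_rfl hb.le]
        · subst ha'; exact E2 a b le_rfl hb.le
    · rcases le_or_gt b l₁ with hb | hb
      · rcases lt_or_eq_of_le hb with hb' | hb'
        · constructor
          · intro h
            exact σ.symm ((key σ hσi b a hb' ha).mpr
              ⟨(E1 b l₁ hb le_rfl).mp (hπi b l₁ a hb' ha hc (π.symm h)),
               (E2 l₁ a le_rfl ha.le).mp
                 (π.trans (π.symm (hπi b l₁ a hb' ha hc (π.symm h))) (π.symm h))⟩)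
          · intro h
            exact π.symm ((key π hπi b a hb' ha).mpr
              ⟨(E1 b l₁ hb le_rfl).mpr (hσi b l₁ a hb' ha hc (σ.symm h)),
               (E2 l₁ a le_rfl ha.le).mpr
                 (σ.trans (σ.symm (hσi b l₁ a hb' ha hc (σ.symm h))) (σ.symm h))⟩)
        · subst hb'; exact E2 a b ha.le le_rfl
      · exact E2 a b ha.le hb.le

end FFB
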